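/- arXiv:2502.16977 — 6 statements merged into one kernel-verified Lean document; each statement's English description precedes it below -/
import Mathlib

section
/- Let d, n, p ≥ 1, let x_1, …, x_n ∈ ℝ^d and y_1, …, y_n ∈ ℝ, and let a_j : [0,∞) → ℝ and w_j : [0,∞) → ℝ^d (j = 1, …, p) be differentiable curves satisfying the gradient-flow equations w_j'(t) = (a_j(t)/n) · Σ_{i=1}^n r_i(t) x_i 𝟙[⟨w_j(t), x_i⟩ > 0] and a_j'(t) = (1/n) · Σ_{i=1}^n r_i(t) max(⟨w_j(t), x_i⟩, 0), where r_i(t) = y_i − (1/p) Σ_{k=1}^p a_k(t) max(⟨w_k(t), x_i⟩, 0). Then for every j and every t ≥ 0 one has a_j(t)² − ‖w_j(t)‖² = a_j(0)² − ‖w_j(0)‖². Moreover, if |a_j(0)| ≥ ‖w_j(0)‖, then for all t ≥ 0 one has a_j(0)·a_j(t) ≥ 0 (a_j never changes sign) and |a_j(t)| ≥ ‖w_j(t)‖. -/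
/-!
Homogeneity of the ReLU gives `⟪w_j, w_j'⟫ = a_j a_j'`, so `a_j² - ‖w_j‖²` has zero derivative.
If it starts nonnegative then `‖w_j‖ ≤ |a_j|` forever, hence `|a_j'| ≤ C ‖w_j‖ ≤ C |a_j|` on every
compact time interval (the residuals are continuous). Grönwall's inequality run backwards in time
then shows that a zero of `a_j` at a later time forces `a_j(0) = 0`, so by the intermediate value
theorem `a_j` cannot change sign.
-/

open scoped RealInnerProductSpace
open Set

theorem eq_zero_of_norm_deriv_le_mul_norm_self_of_right_eq_zero {E : Type*}
    [NormedAddCommGroup E] [NormedSpace ℝ E] {f f' : ℝ → E} {K a b : ℝ}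
    (hf : ContinuousOn f (Icc a b)) (hf' : ∀ x ∈ Ioc a b, HasDerivWithinAt f (f' x) (Iic x) x)
    (hb : f b = 0) (bound : ∀ x ∈ Ioc a b, ‖f' x‖ ≤ K * ‖f x‖) :
    ∀ x ∈ Icc a b, f x = 0 := by
  have hmaps : MapsTo Neg.neg (Icc (-b) (-a)) (Icc a b) := fun s hs =>
    ⟨le_neg.mp hs.2, neg_le.mp hs.1⟩
  have hmem : ∀ s ∈ Ico (-b) (-a), -s ∈ Ioc a b := fun s hs =>
    ⟨lt_neg.mp hs.2, neg_le.mp hs.1⟩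
  have hreflected := eq_zero_of_abs_deriv_le_mul_abs_self_of_eq_zero_right
    (f := f ∘ Neg.neg) (f' := fun s => -f' (-s)) (K := K)
    (hf.comp continuousOn_neg hmaps)
    (fun s hs => by
      have h := (hf' (-s) (hmem s hs)).scomp s (hasDerivAt_neg s).hasDerivWithinAt
        fun u (hu : s ≤ u) => neg_le_neg hu
      rwa [neg_one_smul] at h)
    (by simpa using hb)
    (fun s hs => by simpa using bound (-s) (hmem s hs))
  intro x hx
  simpa using hreflected (-x) ⟨neg_le_neg hx.2, neg_le_neg hx.1⟩

theorem zero_le_mul_of_eq_zero_imp_left_eq_zero {f : ℝ → ℝ} {a b : ℝ} (hab : a ≤ b)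
    (hf : ContinuousOn f (Icc a b)) (hzero : ∀ c ∈ Icc a b, f c = 0 → f a = 0) :
    0 ≤ f a * f b := by
  by_contra! hneg
  have hsign : (0 : ℝ) ∈ uIcc (f a) (f b) := by
    rcases mul_neg_iff.mp hneg with ⟨ha, hb⟩ | ⟨ha, hb⟩
    · exact mem_uIcc.mpr (Or.inr ⟨hb.le, ha.le⟩)
    · exact mem_uIcc.mpr (Or.inl ⟨ha.le, hb.le⟩)
  rw [← uIcc_of_le hab] at hf
  obtain ⟨c, hc, hfc⟩ := intermediate_value_uIcc hf hsign
  rw [uIcc_of_le hab] at hc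
  simp [hzero c hc hfc] at hneg

section

variable {E ι : Type*} [NormedAddCommGroup E] [InnerProductSpace ℝ E] [Fintype ι]

theorem inner_sum_ite_pos_smul (w : E) (x : ι → E) (r : ι → ℝ) :
    ⟪w, ∑ i, (if 0 < ⟪w, x i⟫ then r i else 0) • x i⟫ = ∑ i, r i * max ⟪w, x i⟫ 0 := by
  rw [inner_sum]
  refine Finset.sum_congr rfl fun i _ => ?_
  rw [real_inner_smul_right]
  split_ifs with h
  · rw [max_eq_left h.le, mul_comm]
  · rw [max_eq_right (not_lt.mp h), zero_mul, mul_zero]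

theorem abs_sum_mul_max_inner_le (w : E) (x : ι → E) (r : ι → ℝ) :
    |∑ i, r i * max ⟪w, x i⟫ 0| ≤ ‖w‖ * ∑ i, |r i| * ‖x i‖ := by
  rw [Finset.mul_sum]
  refine (Finset.abs_sum_le_sum_abs _ _).trans (Finset.sum_le_sum fun i _ => ?_)
  have hrelu : max ⟪w, x i⟫ 0 ≤ ‖w‖ * ‖x i‖ :=
    max_le ((le_abs_self _).trans (abs_real_inner_le_norm _ _)) (by positivity)
  rw [abs_mul, abs_of_nonneg (le_max_right ⟪w, x i⟫ 0)]
  nlinarith [abs_nonneg (r i)]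

theorem HasDerivAt.sq_sub_norm_sq_of_inner_eq {a : ℝ → ℝ} {w : ℝ → E} {a' t : ℝ} {w' : E}
    (ha : HasDerivAt a a' t) (hw : HasDerivAt w w' t) (hbal : ⟪w t, w'⟫ = a t * a') :
    HasDerivAt (fun u => a u ^ 2 - ‖w u‖ ^ 2) 0 t := by
  refine ((ha.pow 2).sub hw.norm_sq).congr_deriv ?_
  rw [hbal]
  ring

/-- One neuron of the flow, with the residuals `r` treated as given functions of time and `m`
in the role of the sample count `n`. -/
structure IsNeuronGradientFlow (x : ι → E) (r : ι → ℝ → ℝ) (m : ℝ) (a : ℝ → ℝ) (w : ℝ → E) :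
    Prop where
  hasDerivAt_w : ∀ t, 0 ≤ t →
    HasDerivAt w ((a t / m) • ∑ i, (if 0 < ⟪w t, x i⟫ then r i t else 0) • x i) t
  hasDerivAt_a : ∀ t, 0 ≤ t → HasDerivAt a ((1 / m) * ∑ i, r i t * max ⟪w t, x i⟫ 0) t

namespace IsNeuronGradientFlow

variable {x : ι → E} {r : ι → ℝ → ℝ} {m : ℝ} {a : ℝ → ℝ} {w : ℝ → E}

theorem continuousOn_a (h : IsNeuronGradientFlow x r m a w) : ContinuousOn a (Ici 0) :=
  fun t ht => (h.hasDerivAt_a t ht).continuousAt.continuousWithinAt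

theorem continuousOn_w (h : IsNeuronGradientFlow x r m a w) : ContinuousOn w (Ici 0) :=
  fun t ht => (h.hasDerivAt_w t ht).continuousAt.continuousWithinAt

theorem sq_sub_norm_sq_eq (h : IsNeuronGradientFlow x r m a w) {t : ℝ} (ht : 0 ≤ t) :
    a t ^ 2 - ‖w t‖ ^ 2 = a 0 ^ 2 - ‖w 0‖ ^ 2 := by
  have hderiv : ∀ u, 0 ≤ u → HasDerivAt (fun u => a u ^ 2 - ‖w u‖ ^ 2) 0 u := fun u hu =>
    (h.hasDerivAt_a u hu).sq_sub_norm_sq_of_inner_eq (h.hasDerivAt_w u hu) <| by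
      rw [real_inner_smul_right, inner_sum_ite_pos_smul]
      ring
  exact constant_of_has_deriv_right_zero
    (fun u hu => (hderiv u hu.1).continuousAt.continuousWithinAt)
    (fun u hu => (hderiv u hu.1).hasDerivWithinAt) t ⟨ht, le_rfl⟩

theorem norm_le_abs (h : IsNeuronGradientFlow x r m a w) (h0 : ‖w 0‖ ≤ |a 0|) {t : ℝ}
    (ht : 0 ≤ t) : ‖w t‖ ≤ |a t| := by
  have hbal := h.sq_sub_norm_sq_eq ht
  nlinarith [norm_nonneg (w t), abs_nonneg (a t), sq_abs (a t), sq_abs (a 0), norm_nonneg (w 0)]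

theorem zero_le_mul (h : IsNeuronGradientFlow x r m a w) (hr : ∀ i, ContinuousOn (r i) (Ici 0))
    (h0 : ‖w 0‖ ≤ |a 0|) {t : ℝ} (ht : 0 ≤ t) : 0 ≤ a 0 * a t := by
  refine zero_le_mul_of_eq_zero_imp_left_eq_zero ht (h.continuousOn_a.mono Icc_subset_Ici_self)
    fun c hc hc0 => ?_
  obtain ⟨K, hK⟩ := (isCompact_Icc (a := 0) (b := t)).bddAbove_image
    (f := fun u => |1 / m| * ∑ i, |r i u| * ‖x i‖) <|
    continuousOn_const.mul <| continuousOn_finsetSum _ fun i _ =>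
      ((hr i).mono Icc_subset_Ici_self).abs.mul continuousOn_const
  have hsub : Icc 0 c ⊆ Icc 0 t := Icc_subset_Icc_right hc.2
  refine eq_zero_of_norm_deriv_le_mul_norm_self_of_right_eq_zero (K := K)
    (h.continuousOn_a.mono (hsub.trans Icc_subset_Ici_self))
    (fun u hu => (h.hasDerivAt_a u hu.1.le).hasDerivWithinAt) hc0 (fun u hu => ?_) 0
    ⟨le_rfl, hc.1⟩
  have hu : u ∈ Icc 0 t := hsub (Ioc_subset_Icc_self hu)
  calc ‖(1 / m) * ∑ i, r i u * max ⟪w u, x i⟫ 0‖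
      ≤ |1 / m| * (‖w u‖ * ∑ i, |r i u| * ‖x i‖) := by
        rw [Real.norm_eq_abs, abs_mul]
        gcongr
        exact abs_sum_mul_max_inner_le _ _ _
    _ ≤ |1 / m| * (|a u| * ∑ i, |r i u| * ‖x i‖) := by
        gcongr
        exact h.norm_le_abs h0 hu.1
    _ = (|1 / m| * ∑ i, |r i u| * ‖x i‖) * |a u| := by ring
    _ ≤ K * ‖a u‖ := by
        rw [Real.norm_eq_abs]
        gcongr
        exact hK ⟨u, hu, rfl⟩

end IsNeuronGradientFlow

end

theorem balance_invariant_of_gradient_flow_general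
    (d n p : ℕ)
    (x : Fin n → EuclideanSpace ℝ (Fin d)) (y : Fin n → ℝ)
    (a : Fin p → ℝ → ℝ) (w : Fin p → ℝ → EuclideanSpace ℝ (Fin d))
    (r : Fin n → ℝ → ℝ)
    (hr : ∀ i t, r i t = y i - (1 / (p : ℝ)) * ∑ k, a k t * max (⟪w k t, x i⟫) 0)
    (hw : ∀ j t, 0 ≤ t →
      HasDerivAt (w j)
        ((a j t / (n : ℝ)) • ∑ i, (if 0 < ⟪w j t, x i⟫ then r i t else 0) • x i) t)
    (ha : ∀ j t, 0 ≤ t →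
      HasDerivAt (a j) ((1 / (n : ℝ)) * ∑ i, r i t * max (⟪w j t, x i⟫) 0) t) :
    ∀ j t, 0 ≤ t →
      ((a j t) ^ 2 - ‖w j t‖ ^ 2 = (a j 0) ^ 2 - ‖w j 0‖ ^ 2 ∧
        (|a j 0| ≥ ‖w j 0‖ →
          0 ≤ a j 0 * a j t ∧ |a j t| ≥ ‖w j t‖)) := by
  have hflow : ∀ j, IsNeuronGradientFlow x r n (a j) (w j) := fun j => ⟨hw j, ha j⟩
  have hcr : ∀ i, ContinuousOn (r i) (Ici 0) := fun i => by
    simp_rw [funext (hr i)]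
    exact continuousOn_const.sub <| continuousOn_const.mul <| continuousOn_finsetSum _
      fun k _ => (hflow k).continuousOn_a.mul
        (((hflow k).continuousOn_w.inner continuousOn_const).sup continuousOn_const)
  intro j t ht
  exact ⟨(hflow j).sq_sub_norm_sq_eq ht,
    fun h0 => ⟨(hflow j).zero_le_mul hcr h0 ht, (hflow j).norm_le_abs h0 ht⟩⟩

/-- Along the gradient flow of the square loss of a one-hidden-layer
ReLU network, the balance `a_j(t)² - ‖w_j(t)‖²` is conserved; moreover if
`|a_j(0)| ≥ ‖w_j(0)‖` then `a_j` never changes sign and `|a_j(t)| ≥ ‖w_j(t)‖`. -/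
theorem balance_invariant_of_gradient_flow
    (d n p : ℕ) (hd : 1 ≤ d) (hn : 1 ≤ n) (hp : 1 ≤ p)
    (x : Fin n → EuclideanSpace ℝ (Fin d)) (y : Fin n → ℝ)
    (a : Fin p → ℝ → ℝ) (w : Fin p → ℝ → EuclideanSpace ℝ (Fin d))
    (r : Fin n → ℝ → ℝ)
    (hr : ∀ i t, r i t = y i - (1 / (p : ℝ)) * ∑ k, a k t * max (⟪w k t, x i⟫) 0)
    (hw : ∀ j t, 0 ≤ t →
      HasDerivAt (w j)
        ((a j t / (n : ℝ)) • ∑ i, (if 0 < ⟪w j t, x i⟫ then r i t else 0) • x i) t)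
    (ha : ∀ j t, 0 ≤ t →
      HasDerivAt (a j) ((1 / (n : ℝ)) * ∑ i, r i t * max (⟪w j t, x i⟫) 0) t) :
    ∀ j t, 0 ≤ t →
      ((a j t) ^ 2 - ‖w j t‖ ^ 2 = (a j 0) ^ 2 - ‖w j 0‖ ^ 2 ∧
        (|a j 0| ≥ ‖w j 0‖ →
          0 ≤ a j 0 * a j t ∧ |a j t| ≥ ‖w j t‖)) :=
  balance_invariant_of_gradient_flow_general d n p x y a w r hr hw ha
end

section
/- Let d, n, p ≥ 1, let x_1, …, x_n ∈ ℝ^d be nonzero with C_x^- = min_i ‖x_i‖, C_x^+ = max_i ‖x_i‖, and let y_1, …, y_n ∈ ℝ be nonzero with C_y^- = min_i |y_i|, C_y^+ = max_i |y_i|. Let X ∈ ℝ^{d×n} have columns x_i and let D_X be the diagonal matrix with entries ‖x_i‖², and assume the low-correlation condition ‖XᵀX − D_X‖ < ((C_x^-)²/(2√n)) · (C_y^- /C_y^+). Let a_1, …, a_p ∈ ℝ, w_1, …, w_p ∈ ℝ^d with |a_j| ≥ ‖w_j‖ for all j. Set r_i = y_i − (1/p) Σ_{j=1}^p a_j max(⟨w_j,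 x_i⟩, 0), let R = (r_1,…,r_n) and assume R ≠ 0, let P_j be the diagonal matrix with entries 𝟙[⟨w_j, x_i⟩ > 0], and set μ = (2/(np‖R‖²)) Σ_{j=1}^p [ (w_jᵀ X P_j R)² + a_j² ‖X P_j R‖² ]. Then μ ≥ (6/(5n)) · ((C_x^-)²/C_x^+) · C_y^- · min_i |1 − r_i/y_i|. -/
open scoped RealInnerProductSpace

/-- The operator norm (induced by the Euclidean norms) of a real matrix. -/
noncomputable def opNorm {m n : ℕ} (A : Matrix (Fin m) (Fin n) ℝ) : ℝ :=
  ‖LinearMap.toContinuousLinearMap (Matrix.toEuclideanLin A)‖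

/-!
Every neuron contributes at least `a_j² ‖X P_j R‖²` to the sum defining `μ`, and with
`ε = ‖XᵀX - D_X‖` one has `‖X u‖² ≥ ∑ᵢ uᵢ² (‖xᵢ‖² - ε)`. Summing over neurons weights sample `i`
by the active mass `cᵢ = ∑_{⟪w_j, x_i⟫ > 0} a_j²`. Since `|a_j| ≥ ‖w_j‖`, each active neuron
outputs at most `a_j² ‖xᵢ‖`, so `‖xᵢ‖ cᵢ ≥ p |yᵢ - rᵢ| ≥ p C_y^- min_k |1 - r_k / y_k|`.
Finally the low-correlation assumption gives `ε ≤ (2/5) (C_x^-)²` (for `n ≥ 2`, as `2√2 > 5/2`;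
for `n = 1` the matrix vanishes), hence `‖xᵢ‖² - ε ≥ (3/5) ((C_x^-)² / C_x^+) ‖xᵢ‖`.
-/

open Finset Matrix

lemma abs_inner_toEuclideanLin_self_le {n : ℕ} (A : Matrix (Fin n) (Fin n) ℝ)
    (u : EuclideanSpace ℝ (Fin n)) : |⟪u, toEuclideanLin A u⟫| ≤ opNorm A * ‖u‖ ^ 2 :=
  calc |⟪u, toEuclideanLin A u⟫| ≤ ‖u‖ * ‖toEuclideanLin A u‖ := abs_real_inner_le_norm _ _
    _ ≤ ‖u‖ * (opNorm A * ‖u‖) := by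
        gcongr
        exact (LinearMap.toContinuousLinearMap (toEuclideanLin A)).le_opNorm u
    _ = opNorm A * ‖u‖ ^ 2 := by ring

lemma inner_toLp_toEuclideanLin_toLp {n : ℕ} (A : Matrix (Fin n) (Fin n) ℝ)
    (c : Fin n → ℝ) : ⟪WithLp.toLp 2 c, toEuclideanLin A (WithLp.toLp 2 c)⟫ = c ⬝ᵥ A *ᵥ c := by
  simp [EuclideanSpace.inner_eq_star_dotProduct, dotProduct_comm]

section Gram

variable {E : Type*} [NormedAddCommGroup E] [InnerProductSpace ℝ E]

/-- The matrix `XᵀX - D_X` of the paper. -/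
noncomputable def offDiagGram {ι : Type*} [DecidableEq ι] (x : ι → E) : Matrix ι ι ℝ :=
  gram ℝ x - diagonal fun i => ‖x i‖ ^ 2

lemma offDiagGram_eq_zero {ι : Type*} [DecidableEq ι] [Subsingleton ι] (x : ι → E) :
    offDiagGram x = 0 := by
  ext i j
  obtain rfl := Subsingleton.elim i j
  simp [offDiagGram, gram_apply]

lemma dotProduct_offDiagGram_mulVec {ι : Type*} [Fintype ι] [DecidableEq ι] (x : ι → E)
    (c : ι → ℝ) :
    c ⬝ᵥ offDiagGram x *ᵥ c = ‖∑ i, c i • x i‖ ^ 2 - ∑ i, c i ^ 2 * ‖x i‖ ^ 2 := by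
  have hgram := star_dotProduct_gram_mulVec (𝕜 := ℝ) x c c
  rw [star_trivial, real_inner_self_eq_norm_sq] at hgram
  rw [offDiagGram, sub_mulVec, dotProduct_sub, hgram]
  simp only [dotProduct, mulVec_diagonal]
  congr 1
  exact sum_congr rfl fun i _ => by ring

variable {n : ℕ}

lemma sum_sq_mul_sub_opNorm_le_norm_sum_smul_sq (x : Fin n → E) (c : Fin n → ℝ) :
    ∑ i, c i ^ 2 * (‖x i‖ ^ 2 - opNorm (offDiagGram x)) ≤ ‖∑ i, c i • x i‖ ^ 2 := by
  have hquad := abs_inner_toEuclideanLin_self_le (offDiagGram x) (WithLp.toLp 2 c)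
  rw [inner_toLp_toEuclideanLin_toLp, dotProduct_offDiagGram_mulVec,
    EuclideanSpace.real_norm_sq_eq] at hquad
  have hsplit : ∑ i, c i ^ 2 * (‖x i‖ ^ 2 - opNorm (offDiagGram x))
      = ∑ i, c i ^ 2 * ‖x i‖ ^ 2 - opNorm (offDiagGram x) * ∑ i, c i ^ 2 := by
    rw [mul_sum, ← sum_sub_distrib]
    exact sum_congr rfl fun i _ => by ring
  linarith [neg_abs_le (‖∑ i, c i • x i‖ ^ 2 - ∑ i, c i ^ 2 * ‖x i‖ ^ 2)]

lemma opNorm_offDiagGram_le (x : Fin n → E) {C θ : ℝ} (hθ : θ ≤ 1)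
    (h : opNorm (offDiagGram x) < C ^ 2 / (2 * √n) * θ) :
    opNorm (offDiagGram x) ≤ 2 / 5 * C ^ 2 := by
  rcases le_or_gt n 1 with hn | hn
  · have : Subsingleton (Fin n) := Fin.subsingleton_iff_le_one.2 hn
    rw [offDiagGram_eq_zero, opNorm, map_zero, map_zero, norm_zero]
    positivity
  have hsqrt : 5 / 4 ≤ √n := (Real.le_sqrt (by norm_num) n.cast_nonneg).2 <| by
    have : (2 : ℝ) ≤ n := by exact_mod_cast hn
    linarith
  calc opNorm (offDiagGram x) ≤ C ^ 2 / (2 * √n) * 1 := h.le.trans (by gcongr)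
    _ ≤ C ^ 2 / (2 * (5 / 4)) := by rw [mul_one]; gcongr
    _ = 2 / 5 * C ^ 2 := by ring

end Gram

section ReLU

variable {E : Type*} [NormedAddCommGroup E] [InnerProductSpace ℝ E]

lemma abs_mul_max_inner_le {a : ℝ} {w : E} (hw : ‖w‖ ≤ |a|) (x : E) :
    |a * max ⟪w, x⟫ 0| ≤ ‖x‖ * if 0 < ⟪w, x⟫ then a ^ 2 else 0 := by
  split_ifs with hwx
  · rw [max_eq_left hwx.le, abs_mul, abs_of_pos hwx]
    calc |a| * ⟪w, x⟫ ≤ |a| * (‖w‖ * ‖x‖) := by gcongr; exact real_inner_le_norm w x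
      _ ≤ |a| * (|a| * ‖x‖) := by gcongr
      _ = ‖x‖ * a ^ 2 := by rw [← sq_abs a]; ring
  · simp [max_eq_right (not_lt.1 hwx)]

lemma abs_sum_mul_max_inner_le_s3 {p : ℕ} {a : Fin p → ℝ} {w : Fin p → E}
    (hw : ∀ j, ‖w j‖ ≤ |a j|) (x : E) :
    |∑ j, a j * max ⟪w j, x⟫ 0| ≤ ‖x‖ * ∑ j, if 0 < ⟪w j, x⟫ then a j ^ 2 else 0 :=
  (abs_sum_le_sum_abs _ _).trans <| by
    rw [mul_sum]
    exact sum_le_sum fun j _ => abs_mul_max_inner_le (hw j) x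

lemma sum_sq_mul_sum_ite_le {n p : ℕ} (x : Fin n → E) (a : Fin p → ℝ)
    (s : Fin p → Fin n → Prop) [∀ j i, Decidable (s j i)] (r : Fin n → ℝ) :
    ∑ i, r i ^ 2 * (‖x i‖ ^ 2 - opNorm (offDiagGram x)) * ∑ j, (if s j i then a j ^ 2 else 0)
      ≤ ∑ j, a j ^ 2 * ‖∑ i, (if s j i then r i else 0) • x i‖ ^ 2 := by
  set ε := opNorm (offDiagGram x)
  calc ∑ i, r i ^ 2 * (‖x i‖ ^ 2 - ε) * ∑ j, (if s j i then a j ^ 2 else 0)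
      = ∑ j, a j ^ 2 * ∑ i, (if s j i then r i else 0) ^ 2 * (‖x i‖ ^ 2 - ε) := by
        simp_rw [mul_sum]
        rw [sum_comm]
        refine sum_congr rfl fun j _ => sum_congr rfl fun i _ => ?_
        split_ifs <;> ring
    _ ≤ ∑ j, a j ^ 2 * ‖∑ i, (if s j i then r i else 0) • x i‖ ^ 2 :=
        sum_le_sum fun j _ => by
          gcongr
          exact sum_sq_mul_sub_opNorm_le_norm_sum_smul_sq x _

lemma mul_mul_le_sq_sub_mul_sum_ite {p : ℕ} (hp : 0 < p) {a : Fin p → ℝ} {w : Fin p → E}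
    (hw : ∀ j, ‖w j‖ ≤ |a j|) {x : E} {κ ε δ : ℝ} (hκ : 0 ≤ κ)
    (hx : κ * ‖x‖ ≤ ‖x‖ ^ 2 - ε) (hδ : δ ≤ |1 / (p : ℝ) * ∑ j, a j * max ⟪w j, x⟫ 0|) :
    κ * p * δ ≤ (‖x‖ ^ 2 - ε) * ∑ j, if 0 < ⟪w j, x⟫ then a j ^ 2 else 0 := by
  have hp' : (0 : ℝ) < p := by exact_mod_cast hp
  have hmass : 0 ≤ ∑ j, if 0 < ⟪w j, x⟫ then a j ^ 2 else 0 :=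
    sum_nonneg fun j _ => by positivity
  calc κ * p * δ ≤ κ * p * |1 / (p : ℝ) * ∑ j, a j * max ⟪w j, x⟫ 0| := by gcongr
    _ = κ * |∑ j, a j * max ⟪w j, x⟫ 0| := by
        rw [abs_mul, abs_of_pos (one_div_pos.2 hp')]
        field_simp
    _ ≤ κ * ‖x‖ * ∑ j, if 0 < ⟪w j, x⟫ then a j ^ 2 else 0 := by
        rw [mul_assoc]
        gcongr
        exact abs_sum_mul_max_inner_le_s3 hw x
    _ ≤ (‖x‖ ^ 2 - ε) * ∑ j, if 0 < ⟪w j, x⟫ then a j ^ 2 else 0 := by gcongr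

end ReLU

lemma mul_abs_le_abs_sub_of_le_abs_one_sub_div {ρ y r : ℝ} (hy : y ≠ 0)
    (h : ρ ≤ |1 - r / y|) : ρ * |y| ≤ |y - r| := by
  rwa [← div_self hy, ← sub_div, abs_div, le_div_iff₀ (abs_pos.2 hy)] at h

lemma mul_le_sq_sub {C t ε : ℝ} (hC : 0 < C) (hCt : C ≤ t) (hε : 0 ≤ ε) :
    (C - ε / C) * t ≤ t ^ 2 - ε := by
  have : t ^ 2 - ε - (C - ε / C) * t = (t - C) * (t + ε / C) := by
    field_simp
    ring
  nlinarith [mul_nonneg (sub_nonneg.2 hCt) (add_nonneg (hC.le.trans hCt) (div_nonneg hε hC.le))]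

lemma three_fifths_mul_sq_div_le_sub_div {C C' ε : ℝ} (hC : 0 < C) (hCC' : C ≤ C')
    (hε : ε ≤ 2 / 5 * C ^ 2) : 3 / 5 * (C ^ 2 / C') ≤ C - ε / C := by
  have h1 : C ^ 2 / C' ≤ C := by
    rw [div_le_iff₀ (hC.trans_le hCC')]
    nlinarith
  have h2 : ε / C ≤ 2 / 5 * C := by
    rw [div_le_iff₀ hC]
    linarith
  linarith

theorem local_PL_lower_bound_low_correlation_general
    (d n p : ℕ) (hn : 1 ≤ n) (hp : 1 ≤ p)
    (x : Fin n → EuclideanSpace ℝ (Fin d)) (hx : ∀ i, x i ≠ 0)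
    (y : Fin n → ℝ) (hy : ∀ i, y i ≠ 0)
    (G D : Matrix (Fin n) (Fin n) ℝ)
    (hG : ∀ i i', G i i' = ⟪x i, x i'⟫)
    (hD : D = Matrix.diagonal fun i => ‖x i‖ ^ 2)
    (hcorr : opNorm (G - D) <
      ((⨅ i, ‖x i‖) ^ 2 / (2 * Real.sqrt n)) * ((⨅ i, |y i|) / ⨆ i, |y i|))
    (a : Fin p → ℝ) (w : Fin p → EuclideanSpace ℝ (Fin d))
    (hbal : ∀ j, |a j| ≥ ‖w j‖)
    (r : Fin n → ℝ)
    (hr : ∀ i, r i = y i - (1 / (p : ℝ)) * ∑ j, a j * max (⟪w j, x i⟫) 0)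
    (R : EuclideanSpace ℝ (Fin n)) (hR : ∀ i, R i = r i) (hR0 : R ≠ 0)
    (v : Fin p → EuclideanSpace ℝ (Fin d))
    (hv : ∀ j, v j = ∑ i, (if 0 < ⟪w j, x i⟫ then r i else 0) • x i)
    (μ : ℝ)
    (hμ : μ = (2 / ((n : ℝ) * p * ‖R‖ ^ 2)) *
      ∑ j, (⟪w j, v j⟫ ^ 2 + (a j) ^ 2 * ‖v j‖ ^ 2)) :
    μ ≥ (6 / (5 * (n : ℝ))) * ((⨅ i, ‖x i‖) ^ 2 / ⨆ i, ‖x i‖) * (⨅ i, |y i|) *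
      ⨅ i, |1 - r i / y i| := by
  have : NeZero n := ⟨by omega⟩
  obtain rfl : G = gram ℝ x := Matrix.ext hG
  subst hD
  set ε := opNorm (offDiagGram x)
  set Cx := ⨅ i, ‖x i‖
  set Cy := ⨅ i, |y i|
  set ρ := ⨅ i, |1 - r i / y i|
  obtain ⟨i₀, hi₀⟩ : ∃ i, ‖x i‖ = Cx := exists_eq_ciInf_of_finite
  obtain ⟨i₁, hi₁⟩ : ∃ i, |y i| = Cy := exists_eq_ciInf_of_finite
  have hCx : 0 < Cx := hi₀ ▸ norm_pos_iff.2 (hx i₀)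
  have hCy : 0 < Cy := hi₁ ▸ abs_pos.2 (hy i₁)
  have hCx' : Cx ≤ ⨆ i, ‖x i‖ :=
    hi₀ ▸ le_ciSup (f := fun i => ‖x i‖) (Finite.bddAbove_range _) i₀
  have hCy' : Cy ≤ ⨆ i, |y i| :=
    hi₁ ▸ le_ciSup (f := fun i => |y i|) (Finite.bddAbove_range _) i₁
  have hρ : 0 ≤ ρ := le_ciInf fun i => abs_nonneg _
  have hε : ε ≤ 2 / 5 * Cx ^ 2 :=
    opNorm_offDiagGram_le x (div_le_one_of_le₀ hCy' (hCy.le.trans hCy')) hcorr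
  set κ := Cx - ε / Cx
  have hκ : 3 / 5 * (Cx ^ 2 / ⨆ i, ‖x i‖) ≤ κ :=
    three_fifths_mul_sq_div_le_sub_div hCx hCx' hε
  have hκ0 : 0 ≤ κ := le_trans (by have := hCx.trans_le hCx'; positivity) hκ
  have hsample (i : Fin n) : κ * p * (Cy * ρ) ≤
      (‖x i‖ ^ 2 - ε) * ∑ j, if 0 < ⟪w j, x i⟫ then a j ^ 2 else 0 := by
    refine mul_mul_le_sq_sub_mul_sum_ite hp hbal hκ0
      (mul_le_sq_sub hCx (ciInf_le (Finite.bddBelow_range _) i) (norm_nonneg _)) ?_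
    calc Cy * ρ ≤ ρ * |y i| := by
          rw [mul_comm]
          exact mul_le_mul_of_nonneg_left (ciInf_le (Finite.bddBelow_range _) i) hρ
      _ ≤ |y i - r i| :=
          mul_abs_le_abs_sub_of_le_abs_one_sub_div (hy i) (ciInf_le (Finite.bddBelow_range _) i)
      _ = _ := by rw [hr i, sub_sub_cancel]
  have hsum : κ * p * (Cy * ρ) * ‖R‖ ^ 2 ≤ ∑ j, (⟪w j, v j⟫ ^ 2 + a j ^ 2 * ‖v j‖ ^ 2) :=
    calc κ * p * (Cy * ρ) * ‖R‖ ^ 2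
        ≤ ∑ i, r i ^ 2 * (‖x i‖ ^ 2 - ε) * ∑ j, if 0 < ⟪w j, x i⟫ then a j ^ 2 else 0 := by
          rw [EuclideanSpace.real_norm_sq_eq, mul_sum]
          refine sum_le_sum fun i _ => ?_
          rw [hR i, mul_comm, mul_assoc (r i ^ 2)]
          exact mul_le_mul_of_nonneg_left (hsample i) (sq_nonneg _)
      _ ≤ ∑ j, a j ^ 2 * ‖v j‖ ^ 2 := by
          simp_rw [hv]
          exact sum_sq_mul_sum_ite_le x a (fun j i => 0 < ⟪w j, x i⟫) r
      _ ≤ _ := sum_le_sum fun j _ => le_add_of_nonneg_left (sq_nonneg _)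
  have hR2 : 0 < ‖R‖ ^ 2 := by positivity
  rw [hμ, ge_iff_le]
  calc 6 / (5 * (n : ℝ)) * (Cx ^ 2 / ⨆ i, ‖x i‖) * Cy * ρ
      = 3 / 5 * (Cx ^ 2 / ⨆ i, ‖x i‖) * (2 / n * (Cy * ρ)) := by ring
    _ ≤ κ * (2 / n * (Cy * ρ)) := by gcongr
    _ = 2 / ((n : ℝ) * p * ‖R‖ ^ 2) * (κ * p * (Cy * ρ) * ‖R‖ ^ 2) := by field_simp
    _ ≤ _ := by gcongr

/-- Under the low-correlation assumption and the balancedness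
`|a_j| ≥ ‖w_j‖`, the local PL curvature satisfies
`μ ≥ (6/(5n)) ((C_x^-)²/C_x^+) C_y^- min_i |1 - r_i/y_i|`. -/
theorem local_PL_lower_bound_low_correlation
    (d n p : ℕ) (hd : 1 ≤ d) (hn : 1 ≤ n) (hp : 1 ≤ p)
    (x : Fin n → EuclideanSpace ℝ (Fin d)) (hx : ∀ i, x i ≠ 0)
    (y : Fin n → ℝ) (hy : ∀ i, y i ≠ 0)
    (G D : Matrix (Fin n) (Fin n) ℝ)
    (hG : ∀ i i', G i i' = ⟪x i, x i'⟫)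
    (hD : D = Matrix.diagonal fun i => ‖x i‖ ^ 2)
    (hcorr : opNorm (G - D) <
      ((⨅ i, ‖x i‖) ^ 2 / (2 * Real.sqrt n)) * ((⨅ i, |y i|) / ⨆ i, |y i|))
    (a : Fin p → ℝ) (w : Fin p → EuclideanSpace ℝ (Fin d))
    (hbal : ∀ j, |a j| ≥ ‖w j‖)
    (r : Fin n → ℝ)
    (hr : ∀ i, r i = y i - (1 / (p : ℝ)) * ∑ j, a j * max (⟪w j, x i⟫) 0)
    (R : EuclideanSpace ℝ (Fin n)) (hR : ∀ i, R i = r i) (hR0 : R ≠ 0)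
    (v : Fin p → EuclideanSpace ℝ (Fin d))
    (hv : ∀ j, v j = ∑ i, (if 0 < ⟪w j, x i⟫ then r i else 0) • x i)
    (μ : ℝ)
    (hμ : μ = (2 / ((n : ℝ) * p * ‖R‖ ^ 2)) *
      ∑ j, (⟪w j, v j⟫ ^ 2 + (a j) ^ 2 * ‖v j‖ ^ 2)) :
    μ ≥ (6 / (5 * (n : ℝ))) * ((⨅ i, ‖x i‖) ^ 2 / ⨆ i, ‖x i‖) * (⨅ i, |y i|) *
      ⨅ i, |1 - r i / y i| :=
  local_PL_lower_bound_low_correlation_general d n p hn hp x hx y hy G D hG hD hcorr a w hbal r hr R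
    hR hR0 v hv μ hμ
end

section
/- Let (Ω, ℱ, P) be a probability space, d, n, p ≥ 1, x_1, …, x_n ∈ ℝ^d, and y_1, …, y_n ∈ ℝ nonzero. Let (a_j, w_j), j = 1, …, p, be mutually independent random pairs with values in ℝ × ℝ^d such that for each j: a_j is independent of w_j, P(a_j > 0) = P(a_j < 0) = 1/2, and P(⟨w_j, x_i⟩ > 0) = 1/2 for every i ∈ {1,…,n}. Then P( for all i there exists j with ⟨w_j, x_i⟩ > 0 and a_j y_i > 0 ) ≥ 1 − n (3/4)^p. In particular, for any ε ∈ (0,1), if p ≥ 4 log(n/ε) then this probability is at least 1 − ε. -/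
/-!
A fixed data point `x_i` is correctly activated by neuron `j` with probability `1/2 · 1/2 = 1/4`,
by independence of `a_j` and `w_j` (the sign of `a_j y_i` is that of `a_j` or of `-a_j`, both of
probability `1/2`). Independence across neurons makes the probability that no neuron works for
`x_i` equal to `(3/4)^p`, and a union bound over the `n` points gives `1 - n (3/4)^p`. Since
`3/4 ≤ exp (-1/4)`, this is at least `1 - ε` once `p ≥ 4 log (n/ε)`.
-/

open scoped RealInnerProductSpace
open MeasureTheory ProbabilityTheory

section

variable {Ω : Type*} [MeasurableSpace Ω] {μ : Measure Ω}

lemma measure_mul_const_pos_eq {f : Ω → ℝ} {c : ℝ} (hc : c ≠ 0) {m : ENNReal}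
    (hpos : μ {ω | 0 < f ω} = m) (hneg : μ {ω | f ω < 0} = m) :
    μ {ω | 0 < f ω * c} = m := by
  rcases hc.lt_or_gt with hc | hc
  · simpa only [mul_pos_iff, hc.not_gt, hc, and_false, and_true, false_or] using hneg
  · simpa only [mul_pos_iff_of_pos_right hc] using hpos

lemma measureReal_inner_pos_and_mul_pos_eq {E : Type*} [NormedAddCommGroup E]
    [InnerProductSpace ℝ E] [MeasurableSpace E] [OpensMeasurableSpace E]
    {a : Ω → ℝ} {w : Ω → E} (haw : IndepFun a w μ) {x : E} {y : ℝ} (hy : y ≠ 0)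
    (hapos : μ {ω | 0 < a ω} = 1/2) (haneg : μ {ω | a ω < 0} = 1/2)
    (hw : μ {ω | 0 < ⟪w ω, x⟫} = 1/2) :
    μ.real {ω | 0 < ⟪w ω, x⟫ ∧ 0 < a ω * y} = 1/4 := by
  have hsplit : {ω | 0 < ⟪w ω, x⟫ ∧ 0 < a ω * y}
      = a ⁻¹' {t | 0 < t * y} ∩ w ⁻¹' {v | 0 < ⟪v, x⟫} := by
    ext ω; exact and_comm
  have hA : MeasurableSet {t : ℝ | 0 < t * y} :=
    measurableSet_lt measurable_const (measurable_id.mul_const y)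
  have hB : MeasurableSet {v : E | 0 < ⟪v, x⟫} :=
    (isOpen_lt continuous_const (continuous_id.inner continuous_const)).measurableSet
  rw [measureReal_def, hsplit, haw.measure_inter_preimage_eq_mul _ _ hA hB,
    Set.preimage_ofPred_eq, Set.preimage_ofPred_eq, measure_mul_const_pos_eq hy hapos haneg,
    hw, ENNReal.toReal_mul]
  norm_num

lemma ProbabilityTheory.iIndepFun.measureReal_iInter_preimage_compl {ι β : Type*} [Fintype ι]
    [MeasurableSpace β] [IsProbabilityMeasure μ] {f : ι → Ω → β} (hf : iIndepFun f μ)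
    (hmeas : ∀ j, Measurable (f j)) {S : Set β} (hS : MeasurableSet S) {q : ℝ}
    (hq : ∀ j, μ.real (f j ⁻¹' S) = q) :
    μ.real (⋂ j, f j ⁻¹' Sᶜ) = (1 - q) ^ Fintype.card ι := by
  rw [measureReal_def, hf.meas_iInter fun j => ⟨Sᶜ, hS.compl, rfl⟩, ENNReal.toReal_prod]
  simp_rw [← measureReal_def, Set.preimage_compl,
    probReal_compl_eq_one_sub (hS.preimage (hmeas _)), hq, Finset.prod_const, Finset.card_univ]

lemma one_sub_card_mul_le_measureReal_iInter_compl [IsProbabilityMeasure μ] {ι : Type*}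
    [Fintype ι] {B : ι → Set Ω} (hB : ∀ i, MeasurableSet (B i)) {r : ℝ}
    (hr : ∀ i, μ.real (B i) ≤ r) :
    1 - Fintype.card ι * r ≤ μ.real (⋂ i, (B i)ᶜ) := by
  rw [← Set.compl_iUnion, probReal_compl_eq_one_sub (MeasurableSet.iUnion hB)]
  have hsum : ∑ i, μ.real (B i) ≤ Fintype.card ι * r := by
    simpa using Finset.sum_le_card_nsmul Finset.univ _ r fun i _ => hr i
  linarith [measureReal_iUnion_fintype_le (μ := μ) B]

end

lemma mul_three_quarters_pow_le {N ε : ℝ} (hN : 0 ≤ N) (hε : 0 < ε) {p : ℕ}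
    (hp : 4 * Real.log (N / ε) ≤ p) : N * (3 / 4) ^ p ≤ ε := by
  rcases hN.eq_or_lt with rfl | hN
  · simpa using hε.le
  have h34 : (3 / 4 : ℝ) ≤ Real.exp (-(1 / 4)) := by
    linarith [Real.add_one_le_exp (-(1 / 4))]
  calc N * (3 / 4) ^ p ≤ N * Real.exp (-(1 / 4)) ^ p := by gcongr
    _ = N * Real.exp (-(p / 4)) := by rw [← Real.exp_nat_mul]; ring_nf
    _ ≤ N * Real.exp (-Real.log (N / ε)) := by gcongr; linarith
    _ = ε := by rw [Real.exp_neg, Real.exp_log (by positivity)]; field_simp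

theorem good_initialization_probability_general
    {Ω : Type*} [MeasurableSpace Ω] (P : Measure Ω) [IsProbabilityMeasure P]
    (d n p : ℕ)
    (x : Fin n → EuclideanSpace ℝ (Fin d)) (y : Fin n → ℝ) (hy : ∀ i, y i ≠ 0)
    (a : Fin p → Ω → ℝ) (w : Fin p → Ω → EuclideanSpace ℝ (Fin d))
    (hameas : ∀ j, Measurable (a j)) (hwmeas : ∀ j, Measurable (w j))
    (hindep : iIndepFun
      (fun j ω => (a j ω, w j ω)) P)
    (hindep' : ∀ j, IndepFun (a j) (w j) P)
    (hapos : ∀ j, P {ω | 0 < a j ω} = 1/2)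
    (haneg : ∀ j, P {ω | a j ω < 0} = 1/2)
    (hwhalf : ∀ j i, P {ω | 0 < ⟪w j ω, x i⟫} = 1/2) :
    1 - (n : ℝ) * (3 / 4) ^ p ≤
      (P {ω | ∀ i, ∃ j, 0 < ⟪w j ω, x i⟫ ∧ 0 < a j ω * y i}).toReal ∧
    ∀ ε : ℝ, 0 < ε → ε < 1 → (p : ℝ) ≥ 4 * Real.log (n / ε) →
      1 - ε ≤ (P {ω | ∀ i, ∃ j, 0 < ⟪w j ω, x i⟫ ∧ 0 < a j ω * y i}).toReal := by
  let good (i : Fin n) : Set (ℝ × EuclideanSpace ℝ (Fin d)) :=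
    {q | 0 < ⟪q.2, x i⟫} ∩ {q | 0 < q.1 * y i}
  have hgood_meas (i : Fin n) : MeasurableSet (good i) :=
    (measurableSet_lt measurable_const (by fun_prop)).inter
      (measurableSet_lt measurable_const (by fun_prop))
  have hneuron_meas (j : Fin p) : Measurable fun ω => (a j ω, w j ω) :=
    (hameas j).prodMk (hwmeas j)
  have hbad (i : Fin n) :
      P.real (⋂ j, (fun ω => (a j ω, w j ω)) ⁻¹' (good i)ᶜ) ≤ (3 / 4) ^ p := by
    rw [hindep.measureReal_iInter_preimage_compl hneuron_meas (hgood_meas i) fun j =>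
      measureReal_inner_pos_and_mul_pos_eq (hindep' j) (hy i) (hapos j) (haneg j) (hwhalf j i)]
    norm_num
  have hbound : 1 - (n : ℝ) * (3 / 4) ^ p ≤
      P.real {ω | ∀ i, ∃ j, 0 < ⟪w j ω, x i⟫ ∧ 0 < a j ω * y i} := by
    convert one_sub_card_mul_le_measureReal_iInter_compl (fun i => MeasurableSet.iInter
      fun j => (hgood_meas i).compl.preimage (hneuron_meas j)) hbad using 2
    · simp
    · ext ω; simp [good]
  refine ⟨hbound, fun ε hε _ hp => hbound.trans' ?_⟩
  linarith [mul_three_quarters_pow_le n.cast_nonneg hε hp]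

/-- With independent symmetric initialization, every data point has a
correctly activated neuron with probability at least `1 - n (3/4)^p`; in particular at
least `1 - ε` as soon as `p ≥ 4 log(n/ε)`. -/
theorem good_initialization_probability
    {Ω : Type*} [MeasurableSpace Ω] (P : Measure Ω) [IsProbabilityMeasure P]
    (d n p : ℕ) (hd : 1 ≤ d) (hn : 1 ≤ n) (hp : 1 ≤ p)
    (x : Fin n → EuclideanSpace ℝ (Fin d)) (y : Fin n → ℝ) (hy : ∀ i, y i ≠ 0)
    (a : Fin p → Ω → ℝ) (w : Fin p → Ω → EuclideanSpace ℝ (Fin d))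
    (hameas : ∀ j, Measurable (a j)) (hwmeas : ∀ j, Measurable (w j))
    (hindep : iIndepFun
      (fun j ω => (a j ω, w j ω)) P)
    (hindep' : ∀ j, IndepFun (a j) (w j) P)
    (hapos : ∀ j, P {ω | 0 < a j ω} = 1/2)
    (haneg : ∀ j, P {ω | a j ω < 0} = 1/2)
    (hwhalf : ∀ j i, P {ω | 0 < ⟪w j ω, x i⟫} = 1/2) :
    1 - (n : ℝ) * (3 / 4) ^ p ≤
      (P {ω | ∀ i, ∃ j, 0 < ⟪w j ω, x i⟫ ∧ 0 < a j ω * y i}).toReal ∧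
    ∀ ε : ℝ, 0 < ε → ε < 1 → (p : ℝ) ≥ 4 * Real.log (n / ε) →
      1 - ε ≤ (P {ω | ∀ i, ∃ j, 0 < ⟪w j ω, x i⟫ ∧ 0 < a j ω * y i}).toReal :=
  good_initialization_probability_general P d n p x y hy a w hameas hwmeas hindep hindep' hapos
    haneg hwhalf
end

section
/- Let c > 0 and x₀ ∈ (−1, 1], and let x : [0,∞) → ℝ be differentiable with x(0) = x₀ and x'(t) = c (1 − x(t)²) for all t ≥ 0. Then for all t ≥ 0, x(t) = ( sinh(ct) + x₀ cosh(ct) ) / ( cosh(ct) + x₀ sinh(ct) ). -/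
/-!
With `D(t) = cosh(ct) + x₀ sinh(ct)` and `N(t) = sinh(ct) + x₀ cosh(ct)` we have `D' = cN` and
`N' = cD`, so the Riccati equation turns `w = xD - N` into the linear equation `w' = -cxw`.
Since `w(0) = 0`, the integrating factor `exp(c ∫ x)` forces `w ≡ 0`, i.e. `x = N / D`, and
`D > 0` because `|x₀| ≤ 1` and `|sinh| < cosh`.
-/

open Real

theorem eq_mul_exp_integral_of_hasDerivAt {a w : ℝ → ℝ} (ha : Continuous a)
    (hw : ∀ t, 0 ≤ t → HasDerivAt w (a t * w t) t) {t : ℝ} (ht : 0 ≤ t) :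
    w t = w 0 * exp (∫ s in (0 : ℝ)..t, a s) := by
  set A : ℝ → ℝ := fun t => ∫ s in (0 : ℝ)..t, a s
  have hA : ∀ t, HasDerivAt A (a t) t := fun t =>
    (ha.integral_hasStrictDerivAt 0 t).hasDerivAt
  set v : ℝ → ℝ := fun t => w t * exp (-A t)
  have hv : ∀ s, 0 ≤ s → HasDerivAt v 0 s := fun s hs =>
    ((hw s hs).mul (hA s).neg.exp).congr_deriv (by ring)
  have hvt : v t = v 0 :=
    constant_of_has_deriv_right_zero (fun s hs => (hv s hs.1).continuousAt.continuousWithinAt)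
      (fun s hs => (hv s hs.1).hasDerivWithinAt) t ⟨ht, le_rfl⟩
  have hv0 : v 0 = w 0 := by simp [v, A]
  calc w t = v t * exp (A t) := by simp [v, mul_assoc, ← exp_add]
    _ = w 0 * exp (A t) := by rw [hvt, hv0]

theorem cosh_add_mul_sinh_pos (u : ℝ) {a : ℝ} (ha : |a| ≤ 1) : 0 < cosh u + a * sinh u := by
  have hsinh : |a * sinh u| < cosh u := calc
    |a * sinh u| ≤ |sinh u| := by
      rw [abs_mul]; exact mul_le_of_le_one_left (abs_nonneg _) ha
    _ < cosh u := by rw [abs_sinh, ← cosh_abs]; exact sinh_lt_cosh _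
  linarith [neg_abs_le (a * sinh u)]

theorem hasDerivAt_cosh_add_mul_sinh (c a t : ℝ) :
    HasDerivAt (fun s => cosh (c * s) + a * sinh (c * s))
      (c * (sinh (c * t) + a * cosh (c * t))) t := by
  have hlin : HasDerivAt (fun s => c * s) c t := by simpa using (hasDerivAt_id t).const_mul c
  exact (hlin.cosh.add (hlin.sinh.const_mul a)).congr_deriv (by ring)

theorem hasDerivAt_sinh_add_mul_cosh (c a t : ℝ) :
    HasDerivAt (fun s => sinh (c * s) + a * cosh (c * s))
      (c * (cosh (c * t) + a * sinh (c * t))) t := by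
  have hlin : HasDerivAt (fun s => c * s) c t := by simpa using (hasDerivAt_id t).const_mul c
  exact (hlin.sinh.add (hlin.cosh.const_mul a)).congr_deriv (by ring)

theorem alignment_ode_closed_form_general
    (c : ℝ) (x₀ : ℝ) (hx₀ : -1 < x₀) (hx₀' : x₀ ≤ 1)
    (x : ℝ → ℝ) (hinit : x 0 = x₀)
    (hode : ∀ t, 0 ≤ t → HasDerivAt x (c * (1 - (x t) ^ 2)) t) :
    ∀ t, 0 ≤ t →
      x t = (Real.sinh (c * t) + x₀ * Real.cosh (c * t)) /
        (Real.cosh (c * t) + x₀ * Real.sinh (c * t)) := by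
  intro t ht
  set D : ℝ → ℝ := fun s => cosh (c * s) + x₀ * sinh (c * s)
  set N : ℝ → ℝ := fun s => sinh (c * s) + x₀ * cosh (c * s)
  have hx_cont : Continuous fun s => x (max s 0) :=
    ContinuousOn.comp_continuous (fun s hs => (hode s hs).continuousAt.continuousWithinAt)
      (continuous_id.max continuous_const) (fun s => le_max_right s 0)
  have hw : ∀ s, 0 ≤ s →
      HasDerivAt (fun s => x s * D s - N s) (-c * x (max s 0) * (x s * D s - N s)) s := by
    intro s hs
    refine (((hode s hs).mul (hasDerivAt_cosh_add_mul_sinh c x₀ s)).sub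
      (hasDerivAt_sinh_add_mul_cosh c x₀ s)).congr_deriv ?_
    rw [max_eq_left hs]
    ring
  have hwt := eq_mul_exp_integral_of_hasDerivAt (continuous_const.mul hx_cont) hw ht
  have hD : 0 < D t := cosh_add_mul_sinh_pos _ (abs_le.mpr ⟨hx₀.le, hx₀'⟩)
  simp only [hinit, D, N, mul_zero, cosh_zero, sinh_zero] at hwt
  rw [eq_div_iff hD.ne']
  linarith

/-- The solution of `x' = c(1 - x²)`, `x(0) = x₀ ∈ (-1,1]`, is
`x(t) = (sinh(ct) + x₀ cosh(ct)) / (cosh(ct) + x₀ sinh(ct))`. -/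
theorem alignment_ode_closed_form
    (c : ℝ) (hc : 0 < c) (x₀ : ℝ) (hx₀ : -1 < x₀) (hx₀' : x₀ ≤ 1)
    (x : ℝ → ℝ) (hinit : x 0 = x₀)
    (hode : ∀ t, 0 ≤ t → HasDerivAt x (c * (1 - (x t) ^ 2)) t) :
    ∀ t, 0 ≤ t →
      x t = (Real.sinh (c * t) + x₀ * Real.cosh (c * t)) /
        (Real.cosh (c * t) + x₀ * Real.sinh (c * t)) :=
  alignment_ode_closed_form_general c x₀ hx₀ hx₀' x hinit hode
end

section
/- Let k, n, p ≥ 1, s ∈ {−1, 1}, let x_1, …, x_k ∈ ℝ^d be orthonormal, and let y_1, …, y_k be nonzero reals with sign s. Let D = (1/√k) Σ_{i=1}^k y_i x_i and let P denote the orthogonal projection of ℝ^d onto span{x_1,…,x_k}. Let w : [0,∞) → ℝ^d be differentiable with ⟨w(t), x_i⟩ > 0 for all t ≥ 0 and all i, set a(t) = s · ( Σ_{i=1}^k ⟨w(t), x_i⟩² )^{1/2}, r_i(t) = y_i − (a(t)/p) ⟨w(t), x_i⟩, and assume w'(t) = (a(t)/n) Σ_{i=1}^k r_i(t) x_i. Then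 the alignment h(t) = ⟨ D/‖D‖ , s · P w(t)/‖P w(t)‖ ⟩ is differentiable with h'(t) = ( √k ‖D‖ / n ) ( 1 − h(t)² ) for all t ≥ 0. -/
/-!
The projected neuron `v = P w` moves with velocity `(a/n) (√k D - (a/p) v)`, since `w'` already
lies in the span of the data: a multiple of `D` plus a radial term. The radial term does not turn
the direction `v/‖v‖`, so the cosine `g = ⟪D/‖D‖, v/‖v‖⟫` obeys
`g' = (a √k ‖D‖ / (n ‖v‖)) (1 - g²)`. As `a = s ‖v‖` this is `g' = s (√k ‖D‖ / n) (1 - g²)`,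
and `h = s g` with `s² = 1`.
-/

open scoped RealInnerProductSpace

open Submodule Set

section Orthonormal

variable {𝕜 E ι : Type*} [RCLike 𝕜] [NormedAddCommGroup E] [InnerProductSpace 𝕜 E] [Fintype ι]
  {x : ι → E}

theorem Orthonormal.starProjection_span_range (hx : Orthonormal 𝕜 x)
    [(span 𝕜 (range x)).HasOrthogonalProjection] (v : E) :
    (span 𝕜 (range x)).starProjection v = ∑ i, inner 𝕜 (x i) v • x i := by
  refine eq_starProjection_of_mem_of_inner_eq_zero
    (sum_mem fun i _ ↦ smul_mem _ _ (subset_span ⟨i, rfl⟩)) fun u hu ↦ ?_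
  induction hu using span_induction with
  | mem u hu =>
    obtain ⟨i, rfl⟩ := hu
    rw [inner_sub_left, hx.inner_left_fintype, inner_conj_symm, sub_self]
  | zero => exact inner_zero_right _
  | add u u' _ _ hu hu' => rw [inner_add_right, hu, hu', add_zero]
  | smul c u _ hu => rw [inner_smul_right, hu, mul_zero]

theorem Orthonormal.sum_smul_ne_zero (hx : Orthonormal 𝕜 x) {c : ι → 𝕜} {i : ι} (hi : c i ≠ 0) :
    ∑ j, c j • x j ≠ 0 := fun h0 ↦ by
  have hxi := hx.inner_left_fintype c i
  rw [h0, inner_zero_left, eq_comm, map_eq_zero] at hxi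
  exact hi hxi

end Orthonormal

section RealInnerProductSpace

variable {E : Type*} [NormedAddCommGroup E] [InnerProductSpace ℝ E]

theorem Orthonormal.norm_sum_smul {ι : Type*} [Fintype ι] {x : ι → E} (hx : Orthonormal ℝ x)
    (c : ι → ℝ) : ‖∑ i, c i • x i‖ = √(∑ i, c i ^ 2) := by
  rw [← Real.sqrt_sq (norm_nonneg _), ← real_inner_self_eq_norm_sq, hx.inner_sum]
  simp [sq]

variable {v : ℝ → E} {v' : E} {t : ℝ}

theorem HasDerivAt.starProjection_of_mem (K : Submodule ℝ E) [K.HasOrthogonalProjection]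
    (hv : HasDerivAt v v' t) (hv' : v' ∈ K) :
    HasDerivAt (fun t ↦ K.starProjection (v t)) v' t := by
  have hPv := K.starProjection.hasFDerivAt.comp_hasDerivAt t hv
  rwa [K.starProjection_eq_self_iff.mpr hv'] at hPv

theorem HasDerivAt.norm (hv : HasDerivAt v v' t) (h0 : v t ≠ 0) :
    HasDerivAt (fun t ↦ ‖v t‖) (⟪v t, v'⟫ / ‖v t‖) t := by
  have hsq := hv.norm_sq.sqrt (by positivity)
  simp only [Real.sqrt_sq (norm_nonneg _)] at hsq
  convert hsq using 1
  ring

theorem HasDerivAt.inner_normalize (e : E) (hv : HasDerivAt v v' t) (h0 : v t ≠ 0) :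
    HasDerivAt (fun t ↦ ⟪e, ‖v t‖⁻¹ • v t⟫)
      ((⟪e, v'⟫ * ‖v t‖ ^ 2 - ⟪e, v t⟫ * ⟪v t, v'⟫) / ‖v t‖ ^ 3) t := by
  simp only [real_inner_smul_right]
  have hn : ‖v t‖ ≠ 0 := norm_ne_zero_iff.mpr h0
  have he : HasDerivAt (fun t ↦ ⟪e, v t⟫) ⟪e, v'⟫ t := by
    simpa using (hasDerivAt_const t e).inner ℝ hv
  refine (((hv.norm h0).fun_inv hn).fun_mul he).congr_deriv ?_
  field_simp
  ring

theorem HasDerivAt.inner_normalize_of_eq_smul_add_smul (u : E) {c μ : ℝ}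
    (hv : HasDerivAt v (c • u + μ • v t) t) (h0 : v t ≠ 0) :
    HasDerivAt (fun t ↦ ⟪‖u‖⁻¹ • u, ‖v t‖⁻¹ • v t⟫)
      (c * ‖u‖ / ‖v t‖ * (1 - ⟪‖u‖⁻¹ • u, ‖v t‖⁻¹ • v t⟫ ^ 2)) t := by
  convert hv.inner_normalize (‖u‖⁻¹ • u) h0 using 1
  have hn : ‖v t‖ ≠ 0 := norm_ne_zero_iff.mpr h0
  simp only [inner_add_right, real_inner_smul_left, real_inner_smul_right,
    real_inner_self_eq_norm_sq, real_inner_comm u]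
  rcases eq_or_ne u 0 with rfl | hu
  · simp
  · have hu' : ‖u‖ ≠ 0 := norm_ne_zero_iff.mpr hu
    field_simp
    ring

end RealInnerProductSpace

theorem alignment_dynamics_general
    (d k n p : ℕ) (hk : 1 ≤ k)
    (s : ℝ) (hs : s = 1 ∨ s = -1)
    (x : Fin k → EuclideanSpace ℝ (Fin d)) (hx : Orthonormal ℝ x)
    (y : Fin k → ℝ)
    (D : EuclideanSpace ℝ (Fin d))
    (hD : D = (1 / Real.sqrt k) • ∑ i, y i • x i)
    (w : ℝ → EuclideanSpace ℝ (Fin d))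
    (hwact : ∀ t, 0 ≤ t → ∀ i, 0 < ⟪w t, x i⟫)
    (aNeuron : ℝ → ℝ)
    (haNeuron : ∀ t, aNeuron t = s * Real.sqrt (∑ i, ⟪w t, x i⟫ ^ 2))
    (r : Fin k → ℝ → ℝ)
    (hr : ∀ i t, r i t = y i - (aNeuron t / (p : ℝ)) * ⟪w t, x i⟫)
    (hw : ∀ t, 0 ≤ t →
      HasDerivAt w ((aNeuron t / (n : ℝ)) • ∑ i, r i t • x i) t)
    (Pw : ℝ → EuclideanSpace ℝ (Fin d))
    (hPw : ∀ t, Pw t =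
      (Submodule.orthogonalProjection (Submodule.span ℝ (Set.range x)) (w t) :
        EuclideanSpace ℝ (Fin d)))
    (h : ℝ → ℝ)
    (hh : ∀ t, h t = ⟪‖D‖⁻¹ • D, s • ‖Pw t‖⁻¹ • Pw t⟫) :
    ∀ t, 0 ≤ t →
      HasDerivAt h ((Real.sqrt k * ‖D‖ / (n : ℝ)) * (1 - h t ^ 2)) t := by
  intro t ht
  set K := span ℝ (range x)
  have hPK : ∀ t, Pw t = K.starProjection (w t) := hPw
  have hPsum : ∀ t, Pw t = ∑ i, ⟪w t, x i⟫ • x i := fun t ↦ by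
    rw [hPK, hx.starProjection_span_range]
    exact Finset.sum_congr rfl fun i _ ↦ by rw [real_inner_comm]
  have hP0 : Pw t ≠ 0 := hPsum t ▸ hx.sum_smul_ne_zero (hwact t ht ⟨0, hk⟩).ne'
  have ha : aNeuron t = s * ‖Pw t‖ := by rw [haNeuron, hPsum, hx.norm_sum_smul]
  have hyD : ∑ i, y i • x i = Real.sqrt k • D := by
    rw [hD, smul_smul, mul_one_div_cancel (by positivity), one_smul]
  have hPderiv : HasDerivAt Pw ((aNeuron t / n * Real.sqrt k) • D
      + (-(aNeuron t / n * (aNeuron t / p))) • Pw t) t := by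
    have hw'K : (aNeuron t / n) • ∑ i, r i t • x i ∈ K :=
      K.smul_mem _ (K.sum_mem fun i _ ↦ K.smul_mem _ (subset_span ⟨i, rfl⟩))
    rw [show Pw = fun t ↦ K.starProjection (w t) from funext hPK]
    refine ((hw t ht).starProjection_of_mem K hw'K).congr_deriv ?_
    simp only [hr, sub_smul, Finset.sum_sub_distrib, mul_smul, ← Finset.smul_sum, hyD, ← hPsum,
      ← hPK]
    module
  have hhs : h = fun t ↦ s * ⟪‖D‖⁻¹ • D, ‖Pw t‖⁻¹ • Pw t⟫ :=
    funext fun t ↦ by rw [hh, real_inner_smul_right]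
  have hs2 : s ^ 2 = 1 := by rcases hs with rfl | rfl <;> norm_num
  rw [hhs]
  refine ((hPderiv.inner_normalize_of_eq_smul_add_smul D hP0).const_mul s).congr_deriv ?_
  have hPn : ‖Pw t‖ ≠ 0 := norm_ne_zero_iff.mpr hP0
  rw [ha]
  field_simp
  rw [hs2, one_mul, one_mul]

/-- For the decoupled single-neuron dynamics on orthonormal data
with outputs of sign `s`, the alignment `h(t) = ⟪D̄, s·Pw(t)/‖Pw(t)‖⟫` satisfies
`h' = (√k ‖D‖ / n)(1 - h²)`. -/
theorem alignment_dynamics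
    (d k n p : ℕ) (hk : 1 ≤ k) (hn : 1 ≤ n) (hp : 1 ≤ p)
    (s : ℝ) (hs : s = 1 ∨ s = -1)
    (x : Fin k → EuclideanSpace ℝ (Fin d)) (hx : Orthonormal ℝ x)
    (y : Fin k → ℝ) (hy : ∀ i, 0 < s * y i)
    (D : EuclideanSpace ℝ (Fin d))
    (hD : D = (1 / Real.sqrt k) • ∑ i, y i • x i)
    (w : ℝ → EuclideanSpace ℝ (Fin d))
    (hwact : ∀ t, 0 ≤ t → ∀ i, 0 < ⟪w t, x i⟫)
    (aNeuron : ℝ → ℝ)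
    (haNeuron : ∀ t, aNeuron t = s * Real.sqrt (∑ i, ⟪w t, x i⟫ ^ 2))
    (r : Fin k → ℝ → ℝ)
    (hr : ∀ i t, r i t = y i - (aNeuron t / (p : ℝ)) * ⟪w t, x i⟫)
    (hw : ∀ t, 0 ≤ t →
      HasDerivAt w ((aNeuron t / (n : ℝ)) • ∑ i, r i t • x i) t)
    (Pw : ℝ → EuclideanSpace ℝ (Fin d))
    (hPw : ∀ t, Pw t =
      (Submodule.orthogonalProjection (Submodule.span ℝ (Set.range x)) (w t) :
        EuclideanSpace ℝ (Fin d)))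
    (h : ℝ → ℝ)
    (hh : ∀ t, h t = ⟪‖D‖⁻¹ • D, s • ‖Pw t‖⁻¹ • Pw t⟫) :
    ∀ t, 0 ≤ t →
      HasDerivAt h ((Real.sqrt k * ‖D‖ / (n : ℝ)) * (1 - h t ^ 2)) t :=
  alignment_dynamics_general d k n p hk s hs x hx y D hD w hwact aNeuron haNeuron r hr hw Pw hPw h
    hh
end

section
/- Let d, n, p ≥ 1, x_1, …, x_n ∈ ℝ^d, y_1, …, y_n ∈ ℝ, and let I ⊆ ℝ be an open interval. Let a_j : I → ℝ and w_j : I → ℝ^d (j = 1,…,p) be differentiable and satisfy on I the gradient-flow equations w_j'(t) = (a_j(t)/n) Σ_{i=1}^n r_i(t) x_i 𝟙[⟨w_j(t), x_i⟩ > 0] and a_j'(t) = (1/n) Σ_{i=1}^n r_i(t) max(⟨w_j(t), x_i⟩, 0), where r_i(t) = y_i − (1/p) Σ_{k=1}^p a_k(t) max(⟨w_k(t), x_i⟩, 0). Assume that for every i, j the sign of ⟨w_j(t), x_i⟩ (positive, zero, or negative) does not depend on t ∈ I. Let X ∈ ℝ^{d×n} have columns x_i, let P_j be the diagonal matrix with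 entries 𝟙[⟨w_j(t), x_i⟩ > 0] (constant on I), let R(t) = (r_1(t),…,r_n(t)), and let M(t) = (1/p) Σ_{j=1}^p [ P_j Xᵀ w_j(t) w_j(t)ᵀ X P_j + a_j(t)² P_j XᵀX P_j ]. Then for every t ∈ I: R'(t) = −(1/n) M(t) R(t); the loss L(t) = (1/(2n)) ‖R(t)‖² satisfies L'(t) = −(1/n²) R(t)ᵀ M(t) R(t); and if R(t) ≠ 0 then −L'(t)/L(t) = (2/n) R̄(t)ᵀ M(t) R̄(t), where R̄(t) = R(t)/‖R(t)‖. -/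
open scoped RealInnerProductSpace
open Matrix Filter Topology

/-!
While no inner product `⟪w_j, x_i⟫` changes sign, each ReLU `max ⟪w_j, x_i⟫ 0` coincides near `t`
with the linear function `𝟙[⟪w_j(t), x_i⟫ > 0] ⟪w_j, x_i⟫`, so the residuals are differentiable
and the chain rule applies. Substituting the gradient-flow equations, neuron `j` moves the residual
vector by `-(1/(np)) K_j R`, where `K_j = P_j Xᵀ w_j w_jᵀ X P_j + a_j² P_j XᵀX P_j` comes from the
motion of `a_j` and of `w_j` respectively; summing over `j` gives `R' = -(1/n) M R`. The statements
about `L` are then the chain rule for `‖R‖²` and the rescaling `R̄ᵀ M R̄ = Rᵀ M R / ‖R‖²`.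
-/

variable {E : Type*} [NormedAddCommGroup E] [InnerProductSpace ℝ E]
variable {ι : Type*} [Fintype ι]

theorem Real.sign_eq_one_iff {u : ℝ} : Real.sign u = 1 ↔ 0 < u := by
  refine ⟨fun h => ?_, Real.sign_of_pos⟩
  rcases lt_trichotomy u 0 with hu | hu | hu
  · rw [Real.sign_of_neg hu] at h; norm_num at h
  · rw [hu, Real.sign_zero] at h; norm_num at h
  · exact hu

theorem max_zero_eq_ite_mul (u : ℝ) : max u 0 = (if 0 < u then 1 else 0) * u := by
  split_ifs with hu
  · rw [max_eq_left hu.le, one_mul]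
  · rw [max_eq_right (not_lt.mp hu), zero_mul]

theorem HasDerivAt.max_zero_of_eventually_sign_eq {f : ℝ → ℝ} {f' t : ℝ} (hf : HasDerivAt f f' t)
    (hsign : ∀ᶠ s in 𝓝 t, Real.sign (f s) = Real.sign (f t)) :
    HasDerivAt (fun s => max (f s) 0) ((if 0 < f t then 1 else 0) * f') t := by
  refine (hf.const_mul _).congr_of_eventuallyEq ?_
  filter_upwards [hsign] with s hs
  have hpos : 0 < f s ↔ 0 < f t := by rw [← Real.sign_eq_one_iff, hs, Real.sign_eq_one_iff]
  simp only [max_zero_eq_ite_mul, hpos]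

theorem hasDerivAt_mul_relu_inner {a : ℝ → ℝ} {w : ℝ → E} {a' t : ℝ} {w' u : E}
    (ha : HasDerivAt a a' t) (hw : HasDerivAt w w' t)
    (hsign : ∀ᶠ s in 𝓝 t, Real.sign ⟪w s, u⟫ = Real.sign ⟪w t, u⟫) :
    HasDerivAt (fun s => a s * max ⟪w s, u⟫ 0)
      (a' * max ⟪w t, u⟫ 0 + a t * ((if 0 < ⟪w t, u⟫ then 1 else 0) * ⟪w', u⟫)) t := by
  have hinner : HasDerivAt (fun s => ⟪w s, u⟫) ⟪w', u⟫ t := by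
    simpa using hw.inner ℝ (hasDerivAt_const t u)
  exact ha.mul (hinner.max_zero_of_eventually_sign_eq hsign)

theorem hasDerivAt_residual {κ : Type*} [Fintype κ] {a : κ → ℝ → ℝ} {w : κ → ℝ → E}
    {a' : κ → ℝ} {w' : κ → E} {u : E} {t : ℝ} (y c : ℝ)
    (ha : ∀ k, HasDerivAt (a k) (a' k) t) (hw : ∀ k, HasDerivAt (w k) (w' k) t)
    (hsign : ∀ k, ∀ᶠ s in 𝓝 t, Real.sign ⟪w k s, u⟫ = Real.sign ⟪w k t, u⟫) :
    HasDerivAt (fun s => y - c * ∑ k, a k s * max ⟪w k s, u⟫ 0)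
      (-(c * ∑ k, (a' k * max ⟪w k t, u⟫ 0 +
        a k t * ((if 0 < ⟪w k t, u⟫ then 1 else 0) * ⟪w' k, u⟫)))) t :=
  ((HasDerivAt.fun_sum fun k _ => hasDerivAt_mul_relu_inner (ha k) (hw k) (hsign k)).const_mul
    c).const_sub y

/-- The paper's `P Xᵀ w wᵀ X P + a² P XᵀX P`, where `P = diag 𝟙[⟪w, x_i⟫ > 0]`. -/
noncomputable def neuronKernel (a : ℝ) (w : E) (x : ι → E) : Matrix ι ι ℝ :=
  Matrix.of fun i i' =>
    (if 0 < ⟪w, x i⟫ then 1 else 0) * ⟪x i, w⟫ * ⟪x i', w⟫ * (if 0 < ⟪w, x i'⟫ then 1 else 0) +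
      a ^ 2 * (if 0 < ⟪w, x i⟫ then 1 else 0) * ⟪x i, x i'⟫ * (if 0 < ⟪w, x i'⟫ then 1 else 0)

theorem neuron_velocity_eq_neuronKernel_mulVec (a ν : ℝ) (w : E) (x : ι → E) (R : ι → ℝ)
    (i : ι) :
    (1 / ν * ∑ i', R i' * max ⟪w, x i'⟫ 0) * max ⟪w, x i⟫ 0 +
        a * ((if 0 < ⟪w, x i⟫ then 1 else 0) *
          ⟪(a / ν) • ∑ i', (if 0 < ⟪w, x i'⟫ then R i' else 0) • x i', x i⟫) =
      1 / ν * (neuronKernel a w x *ᵥ R) i := by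
  simp only [neuronKernel, mulVec, dotProduct, of_apply, max_zero_eq_ite_mul, real_inner_smul_left,
    sum_inner, ite_smul, zero_smul, apply_ite (inner ℝ · (x i)), inner_zero_left,
    Finset.mul_sum, Finset.sum_mul, ← Finset.sum_add_distrib]
  refine Finset.sum_congr rfl fun i' _ => ?_
  rw [real_inner_comm (x i) w, real_inner_comm (x i') w, real_inner_comm (x i') (x i)]
  split_ifs <;> ring

theorem hasDerivAt_sum_sq {r : ι → ℝ → ℝ} {r' : ι → ℝ} {t : ℝ}
    (hr : ∀ i, HasDerivAt (r i) (r' i) t) :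
    HasDerivAt (fun s => ∑ i, r i s ^ 2) (2 * ((fun i => r i t) ⬝ᵥ r')) t := by
  refine (HasDerivAt.fun_sum fun i _ => (hr i).pow 2).congr_deriv ?_
  simp only [dotProduct, Finset.mul_sum]
  refine Finset.sum_congr rfl fun i _ => ?_
  push_cast
  ring

theorem dotProduct_div_mulVec_div (A : Matrix ι ι ℝ) (R : ι → ℝ) (c : ℝ) :
    (fun i => R i / c) ⬝ᵥ A *ᵥ (fun i => R i / c) = (R ⬝ᵥ A *ᵥ R) / c ^ 2 := by
  have hdiv : (fun i => R i / c) = c⁻¹ • R := funext fun i => div_eq_inv_mul (R i) c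
  rw [hdiv, mulVec_smul, dotProduct_smul, smul_dotProduct, smul_eq_mul, smul_eq_mul, ← mul_assoc,
    ← mul_inv, ← sq, div_eq_inv_mul]

theorem residual_dynamics_constant_activation_general
    (d n p : ℕ)
    (x : Fin n → EuclideanSpace ℝ (Fin d)) (y : Fin n → ℝ)
    (I : Set ℝ) (hIopen : IsOpen I)
    (a : Fin p → ℝ → ℝ) (w : Fin p → ℝ → EuclideanSpace ℝ (Fin d))
    (r : Fin n → ℝ → ℝ)
    (hr : ∀ i t, r i t = y i - (1 / (p : ℝ)) * ∑ k, a k t * max (⟪w k t, x i⟫) 0)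
    (hw : ∀ j, ∀ t ∈ I,
      HasDerivAt (w j)
        ((a j t / (n : ℝ)) • ∑ i, (if 0 < ⟪w j t, x i⟫ then r i t else 0) • x i) t)
    (ha : ∀ j, ∀ t ∈ I,
      HasDerivAt (a j) ((1 / (n : ℝ)) * ∑ i, r i t * max (⟪w j t, x i⟫) 0) t)
    (hsign : ∀ i j, ∀ t ∈ I, ∀ t' ∈ I,
      Real.sign ⟪w j t, x i⟫ = Real.sign ⟪w j t', x i⟫)
    (M : ℝ → Matrix (Fin n) (Fin n) ℝ)
    (hM : ∀ t i i', M t i i' = (1 / (p : ℝ)) *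
      ∑ j, ((if 0 < ⟪w j t, x i⟫ then 1 else 0) * ⟪x i, w j t⟫ * ⟪x i', w j t⟫ *
              (if 0 < ⟪w j t, x i'⟫ then 1 else 0) +
            (a j t) ^ 2 * (if 0 < ⟪w j t, x i⟫ then 1 else 0) * ⟪x i, x i'⟫ *
              (if 0 < ⟪w j t, x i'⟫ then 1 else 0)))
    (L : ℝ → ℝ) (hL : ∀ t, L t = (1 / (2 * (n : ℝ))) * ∑ i, r i t ^ 2) :
    ∀ t ∈ I,
      (∀ i, HasDerivAt (r i) ((-(1 : ℝ) / n) * (M t).mulVec (fun i' => r i' t) i) t) ∧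
      HasDerivAt L ((-(1 : ℝ) / (n : ℝ) ^ 2) *
        dotProduct (fun i => r i t) ((M t).mulVec fun i' => r i' t)) t ∧
      ((fun i => r i t) ≠ 0 →
        -((-(1 : ℝ) / (n : ℝ) ^ 2) *
            dotProduct (fun i => r i t) ((M t).mulVec fun i' => r i' t)) / L t =
          (2 / (n : ℝ)) *
            dotProduct (fun i => r i t / Real.sqrt (∑ i', r i' t ^ 2))
              ((M t).mulVec fun i' => r i' t / Real.sqrt (∑ i'', r i'' t ^ 2))) := by
  intro t ht
  set R : Fin n → ℝ := fun i => r i t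
  have hMt : M t = (1 / (p : ℝ)) • ∑ j, neuronKernel (a j t) (w j t) x := by
    ext i i'
    simp only [hM, neuronKernel, Matrix.smul_apply, Matrix.sum_apply, of_apply, smul_eq_mul]
  have hR : ∀ i, HasDerivAt (r i) ((-(1 : ℝ) / n) * (M t *ᵥ R) i) t := by
    intro i
    have hsign_t : ∀ k, ∀ᶠ s in 𝓝 t, Real.sign ⟪w k s, x i⟫ = Real.sign ⟪w k t, x i⟫ :=
      fun k => eventually_of_mem (hIopen.mem_nhds ht) fun s hs => hsign i k s hs t ht
    have hres := hasDerivAt_residual (y i) (1 / (p : ℝ)) (fun k => ha k t ht) (fun k => hw k t ht)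
      hsign_t
    refine (hres.congr_of_eventuallyEq (Eventually.of_forall (hr i))).congr_deriv ?_
    simp only [neuron_velocity_eq_neuronKernel_mulVec, hMt, smul_mulVec, sum_mulVec,
      Pi.smul_apply, Finset.sum_apply, smul_eq_mul, ← Finset.mul_sum]
    ring
  refine ⟨hR, ?_, fun _ => ?_⟩
  · refine (((hasDerivAt_sum_sq hR).const_mul (1 / (2 * (n : ℝ)))).congr_of_eventuallyEq
      (Eventually.of_forall hL)).congr_deriv ?_
    rw [show (fun i => (-(1 : ℝ) / n) * (M t *ᵥ R) i) = (-(1 : ℝ) / n) • (M t *ᵥ R) from rfl,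
      dotProduct_smul, smul_eq_mul]
    ring
  · rw [hL, dotProduct_div_mulVec_div, Real.sq_sqrt (Finset.sum_nonneg fun i _ => sq_nonneg _)]
    obtain hn | hn := eq_or_ne (n : ℝ) 0
    · simp [hn]
    obtain hS | hS := eq_or_ne (∑ i, r i t ^ 2) 0
    · simp [hS]
    field_simp
    ring

/-- On an open interval where the activation pattern is constant,
the residual vector evolves linearly, `R' = -(1/n) M R`, the loss
`L = (1/2n)‖R‖²` satisfies `L' = -(1/n²) RᵀMR`, and the local PL curvature is
`-L'/L = (2/n) R̄ᵀMR̄`. -/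
theorem residual_dynamics_constant_activation
    (d n p : ℕ) (hd : 1 ≤ d) (hn : 1 ≤ n) (hp : 1 ≤ p)
    (x : Fin n → EuclideanSpace ℝ (Fin d)) (y : Fin n → ℝ)
    (I : Set ℝ) (hIopen : IsOpen I) (hIconn : I.OrdConnected)
    (a : Fin p → ℝ → ℝ) (w : Fin p → ℝ → EuclideanSpace ℝ (Fin d))
    (r : Fin n → ℝ → ℝ)
    (hr : ∀ i t, r i t = y i - (1 / (p : ℝ)) * ∑ k, a k t * max (⟪w k t, x i⟫) 0)
    (hw : ∀ j, ∀ t ∈ I,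
      HasDerivAt (w j)
        ((a j t / (n : ℝ)) • ∑ i, (if 0 < ⟪w j t, x i⟫ then r i t else 0) • x i) t)
    (ha : ∀ j, ∀ t ∈ I,
      HasDerivAt (a j) ((1 / (n : ℝ)) * ∑ i, r i t * max (⟪w j t, x i⟫) 0) t)
    (hsign : ∀ i j, ∀ t ∈ I, ∀ t' ∈ I,
      Real.sign ⟪w j t, x i⟫ = Real.sign ⟪w j t', x i⟫)
    (M : ℝ → Matrix (Fin n) (Fin n) ℝ)
    (hM : ∀ t i i', M t i i' = (1 / (p : ℝ)) *
      ∑ j, ((if 0 < ⟪w j t, x i⟫ then 1 else 0) * ⟪x i, w j t⟫ * ⟪x i', w j t⟫ *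
              (if 0 < ⟪w j t, x i'⟫ then 1 else 0) +
            (a j t) ^ 2 * (if 0 < ⟪w j t, x i⟫ then 1 else 0) * ⟪x i, x i'⟫ *
              (if 0 < ⟪w j t, x i'⟫ then 1 else 0)))
    (L : ℝ → ℝ) (hL : ∀ t, L t = (1 / (2 * (n : ℝ))) * ∑ i, r i t ^ 2) :
    ∀ t ∈ I,
      (∀ i, HasDerivAt (r i) ((-(1 : ℝ) / n) * (M t).mulVec (fun i' => r i' t) i) t) ∧
      HasDerivAt L ((-(1 : ℝ) / (n : ℝ) ^ 2) *
        dotProduct (fun i => r i t) ((M t).mulVec fun i' => r i' t)) t ∧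
      ((fun i => r i t) ≠ 0 →
        -((-(1 : ℝ) / (n : ℝ) ^ 2) *
            dotProduct (fun i => r i t) ((M t).mulVec fun i' => r i' t)) / L t =
          (2 / (n : ℝ)) *
            dotProduct (fun i => r i t / Real.sqrt (∑ i', r i' t ^ 2))
              ((M t).mulVec fun i' => r i' t / Real.sqrt (∑ i'', r i'' t ^ 2))) :=
  residual_dynamics_constant_activation_general d n p x y I hIopen a w r hr hw ha hsign M hM L hL
end
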